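/- arXiv:2510.00915 — 2 statements merged into one kernel-verified Lean document; each statement's English description precedes it below -/
import Mathlib

section
/- Let G be an integrable real random variable with E[G] = 0, let R* ∈ {0,1}, and let R̃ be generated from R* by the verifier channel with rates ρ₀, ρ₁, with the channel noise conditionally independent of G given R*. Define W = ρ₁-1 if R̃=0 and W = ρ₁ if R̃=1. Then E[W·G] = (1 - ρ₀ - ρ₁)·E[R*·G]. -/
open MeasureTheory ProbabilityTheory

/-- Forward correction: E[W·G] = (1-ρ₀-ρ₁)·E[R*·G], where W is the forward weight,
E[G]=0, and R̃ (hence W) is conditionally independent of G given R*, expressed by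
factorization of the conditional expectation E[W·G | R*=r] = E[W|R*=r]·E[G|R*=r]. -/
theorem stmt_5 {Ω : Type*} [MeasurableSpace Ω] (μ : Measure Ω) [IsProbabilityMeasure μ]
    (Rs Rt G : Ω → ℝ) (hRsM : Measurable Rs) (hRtM : Measurable Rt) (hGM : Measurable G)
    (hRs01 : ∀ ω, Rs ω = 0 ∨ Rs ω = 1) (hRt01 : ∀ ω, Rt ω = 0 ∨ Rt ω = 1)
    (hGint : Integrable G μ) (hGmean : ∫ ω, G ω ∂μ = 0)
    (ρ₀ ρ₁ : ℝ) (hρ₀0 : 0 ≤ ρ₀) (hρ₀1 : ρ₀ < 1/2) (hρ₁0 : 0 ≤ ρ₁) (hρ₁1 : ρ₁ < 1/2)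
    (hpos0 : μ (Rs ⁻¹' {0}) ≠ 0) (hpos1 : μ (Rs ⁻¹' {1}) ≠ 0)
    (hFP : (μ[|Rs ⁻¹' {0}]) (Rt ⁻¹' {1}) = ENNReal.ofReal ρ₀)
    (hFN : (μ[|Rs ⁻¹' {1}]) (Rt ⁻¹' {0}) = ENNReal.ofReal ρ₁)
    (W : Ω → ℝ) (hW : ∀ ω, W ω = if Rt ω = 1 then ρ₁ else ρ₁ - 1)
    (hCondIndep : ∀ r ∈ ({0, 1} : Set ℝ),
      ∫ ω, W ω * G ω ∂(μ[|Rs ⁻¹' {r}])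
        = (∫ ω, W ω ∂(μ[|Rs ⁻¹' {r}])) * ∫ ω, G ω ∂(μ[|Rs ⁻¹' {r}])) :
    ∫ ω, W ω * G ω ∂μ = (1 - ρ₀ - ρ₁) * ∫ ω, Rs ω * G ω ∂μ := by
  set A : Set Ω := Rs ⁻¹' {0} with hAdef
  set B : Set Ω := Rs ⁻¹' {1} with hBdef
  have hA : MeasurableSet A := hRsM (measurableSet_singleton 0)
  have hB : MeasurableSet B := hRsM (measurableSet_singleton 1)
  have hAc : Aᶜ = B := by
    ext ω; rcases hRs01 ω with h | h <;>
      simp [hAdef, hBdef, Set.mem_preimage, h]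
  -- W is measurable and bounded
  have hWM : Measurable W := by
    have : W = fun ω => if Rt ω = 1 then ρ₁ else ρ₁ - 1 := funext hW
    rw [this]
    exact Measurable.ite (hRtM (measurableSet_singleton 1)) measurable_const
      measurable_const
  have hWb : ∀ ω, ‖W ω‖ ≤ 1 := by
    intro ω
    rw [hW ω]
    rcases hRt01 ω with h | h <;> simp [h, Real.norm_eq_abs, abs_le] <;>
      constructor <;> linarith
  have hWGint : Integrable (fun ω => W ω * G ω) μ :=
    hGint.bdd_mul (c := 1) hWM.aestronglyMeasurable (Filter.Eventually.of_forall hWb)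
  -- conversion between conditional and restricted integrals
  have hcond : ∀ (s : Set Ω), μ s ≠ 0 → ∀ f : Ω → ℝ,
      (μ s).toReal * ∫ ω, f ω ∂(μ[|s]) = ∫ ω in s, f ω ∂μ := by
    intro s hs f
    rw [ProbabilityTheory.cond, integral_smul_measure, smul_eq_mul, ← mul_assoc,
      ENNReal.toReal_inv, mul_inv_cancel₀, one_mul]
    exact ENNReal.toReal_ne_zero.2 ⟨hs, measure_ne_top μ s⟩
  -- probability measures
  have hpA : IsProbabilityMeasure (μ[|A]) := cond_isProbabilityMeasure hpos0
  have hpB : IsProbabilityMeasure (μ[|B]) := cond_isProbabilityMeasure hpos1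
  -- compute ∫ W over any probability measure
  have hWint : ∀ ν : Measure Ω, IsProbabilityMeasure ν →
      ∫ ω, W ω ∂ν = ρ₁ - (ν (Rt ⁻¹' {0})).toReal := by
    intro ν hν
    have hWrep : W = fun ω => ρ₁ - (Rt ⁻¹' {0}).indicator (fun _ => (1 : ℝ)) ω := by
      funext ω
      rw [hW ω]
      rcases hRt01 ω with h | h <;>
        simp [h, Set.indicator_apply, Set.mem_preimage]
    rw [hWrep]
    rw [integral_sub (integrable_const ρ₁)
      ((integrable_const (1 : ℝ)).indicator (hRtM (measurableSet_singleton 0)))]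
    simp [integral_indicator_const, hRtM (measurableSet_singleton 0), Measure.real]
  -- Rt⁻¹{0} is complement of Rt⁻¹{1}
  have hRtc : Rt ⁻¹' {0} = (Rt ⁻¹' {1})ᶜ := by
    ext ω; rcases hRt01 ω with h | h <;> simp [Set.mem_preimage, h]
  -- ∫ W conditioned on A
  have hWA : ∫ ω, W ω ∂(μ[|A]) = ρ₀ + ρ₁ - 1 := by
    rw [hWint _ hpA, hRtc, prob_compl_eq_one_sub (hRtM (measurableSet_singleton 1)), hFP,
      ENNReal.toReal_sub_of_le (by simpa using ENNReal.ofReal_le_one.2 (by linarith))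
        (by simp), ENNReal.toReal_ofReal hρ₀0]
    norm_num
    ring
  have hWB : ∫ ω, W ω ∂(μ[|B]) = 0 := by
    rw [hWint _ hpB, hFN, ENNReal.toReal_ofReal hρ₁0]
    ring
  -- split the total integrals
  have hsplitWG : ∫ ω, W ω * G ω ∂μ
      = (∫ ω in A, W ω * G ω ∂μ) + ∫ ω in B, W ω * G ω ∂μ := by
    rw [← hAc, ← integral_add_compl hA hWGint]
  have hsplitG : (∫ ω in A, G ω ∂μ) + ∫ ω in B, G ω ∂μ = 0 := by
    rw [← hAc, integral_add_compl hA hGint, hGmean]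
  -- ∫ Rs·G = ∫_B G
  have hRsG : ∫ ω, Rs ω * G ω ∂μ = ∫ ω in B, G ω ∂μ := by
    have : (fun ω => Rs ω * G ω) = B.indicator G := by
      funext ω
      rcases hRs01 ω with h | h <;>
        simp [Set.indicator_apply, hBdef, Set.mem_preimage, h]
    rw [this, integral_indicator hB]
  -- use conditional independence
  have hCIA := hCondIndep 0 (by simp)
  have hCIB := hCondIndep 1 (by simp)
  -- restricted integrals of W·G
  have hWGA : ∫ ω in A, W ω * G ω ∂μ = (ρ₀ + ρ₁ - 1) * ∫ ω in A, G ω ∂μ := by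
    rw [← hcond A hpos0, ← hcond A hpos0 G, hCIA, hWA]
    ring
  have hWGB : ∫ ω in B, W ω * G ω ∂μ = 0 := by
    rw [← hcond B hpos1, hCIB, hWB]
    ring
  rw [hsplitWG, hWGA, hWGB, hRsG]
  have : ∫ ω in A, G ω ∂μ = - ∫ ω in B, G ω ∂μ := by linarith
  rw [this]
  ring
end

section
/- Under the verifier reward channel with ρ₀+ρ₁ < 1 and E[G]=0, the expectation E[W·G] = (1-ρ₀-ρ₁)·E[R*·G] has the same sign as the clean gradient E[R*·G]; in particular, if E[R*·G] > 0 then E[W·G] > 0. -/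
open MeasureTheory ProbabilityTheory

lemma integrable_cond_aux {Ω : Type*} [MeasurableSpace Ω] {μ : Measure Ω} [IsFiniteMeasure μ]
    {s : Set Ω} (hs0 : μ s ≠ 0) {f : Ω → ℝ} (hf : Integrable f μ) :
    Integrable f (μ[|s]) := by
  rw [ProbabilityTheory.cond]
  exact (hf.restrict).smul_measure (ENNReal.inv_ne_top.mpr hs0)

lemma setIntegral_eq_cond_aux {Ω : Type*} [MeasurableSpace Ω] {μ : Measure Ω} [IsFiniteMeasure μ]
    {s : Set Ω} (hs0 : μ s ≠ 0) (f : Ω → ℝ) :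
    ∫ ω in s, f ω ∂μ = (μ s).toReal * ∫ ω, f ω ∂(μ[|s]) := by
  rw [ProbabilityTheory.cond, integral_smul_measure, ENNReal.toReal_inv, smul_eq_mul,
    ← mul_assoc, mul_inv_cancel₀, one_mul]
  exact ENNReal.toReal_ne_zero.mpr ⟨hs0, measure_ne_top μ s⟩

/-- Forward correction: E[W·G] = (1-ρ₀-ρ₁)·E[R*·G], where W is the forward weight,
E[G]=0, and R̃ (hence W) is conditionally independent of G given R*, expressed by
factorization of the conditional expectation E[W·G | R*=r] = E[W|R*=r]·E[G|R*=r]. -/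
theorem stmt_6 {Ω : Type*} [MeasurableSpace Ω] (μ : Measure Ω) [IsProbabilityMeasure μ]
    (Rs Rt G : Ω → ℝ) (hRsM : Measurable Rs) (hRtM : Measurable Rt) (hGM : Measurable G)
    (hRs01 : ∀ ω, Rs ω = 0 ∨ Rs ω = 1) (hRt01 : ∀ ω, Rt ω = 0 ∨ Rt ω = 1)
    (hGint : Integrable G μ) (hGmean : ∫ ω, G ω ∂μ = 0)
    (ρ₀ ρ₁ : ℝ) (hρ₀0 : 0 ≤ ρ₀) (hρ₀1 : ρ₀ < 1/2) (hρ₁0 : 0 ≤ ρ₁) (hρ₁1 : ρ₁ < 1/2) (hsum : ρ₀ + ρ₁ < 1)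
    (hpos0 : μ (Rs ⁻¹' {0}) ≠ 0) (hpos1 : μ (Rs ⁻¹' {1}) ≠ 0)
    (hFP : (μ[|Rs ⁻¹' {0}]) (Rt ⁻¹' {1}) = ENNReal.ofReal ρ₀)
    (hFN : (μ[|Rs ⁻¹' {1}]) (Rt ⁻¹' {0}) = ENNReal.ofReal ρ₁)
    (W : Ω → ℝ) (hW : ∀ ω, W ω = if Rt ω = 1 then ρ₁ else ρ₁ - 1)
    (hCondIndep : ∀ r ∈ ({0, 1} : Set ℝ),
      ∫ ω, W ω * G ω ∂(μ[|Rs ⁻¹' {r}])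
        = (∫ ω, W ω ∂(μ[|Rs ⁻¹' {r}])) * ∫ ω, G ω ∂(μ[|Rs ⁻¹' {r}])) :
    ∫ ω, W ω * G ω ∂μ = (1 - ρ₀ - ρ₁) * ∫ ω, Rs ω * G ω ∂μ ∧
      (0 < ∫ ω, Rs ω * G ω ∂μ → 0 < ∫ ω, W ω * G ω ∂μ) := by
  have hms0 : MeasurableSet (Rs ⁻¹' {0}) := hRsM (measurableSet_singleton 0)
  have hms1 : MeasurableSet (Rs ⁻¹' {1}) := hRsM (measurableSet_singleton 1)
  have hmt0 : MeasurableSet (Rt ⁻¹' {0}) := hRtM (measurableSet_singleton 0)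
  have hmt1 : MeasurableSet (Rt ⁻¹' {1}) := hRtM (measurableSet_singleton 1)
  have hcompl : (Rs ⁻¹' {1}) = (Rs ⁻¹' {0})ᶜ := by
    ext ω
    simp only [Set.mem_preimage, Set.mem_singleton_iff, Set.mem_compl_iff]
    constructor
    · intro h h'; rw [h'] at h; norm_num at h
    · intro h; rcases hRs01 ω with h' | h' <;> [exact absurd h' h; exact h']
  have hcomplT : (Rt ⁻¹' {0}) = (Rt ⁻¹' {1})ᶜ := by
    ext ω
    simp only [Set.mem_preimage, Set.mem_singleton_iff, Set.mem_compl_iff]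
    constructor
    · intro h h'; rw [h'] at h; norm_num at h
    · intro h; rcases hRt01 ω with h' | h' <;> [exact h'; exact absurd h' h]
  haveI hP0 : IsProbabilityMeasure (μ[|Rs ⁻¹' {0}]) := cond_isProbabilityMeasure hpos0
  haveI hP1 : IsProbabilityMeasure (μ[|Rs ⁻¹' {1}]) := cond_isProbabilityMeasure hpos1
  -- measurability and boundedness of W
  have hWfun : W = fun ω => if Rt ω = 1 then ρ₁ else ρ₁ - 1 := funext hW
  have hWM : Measurable W := by
    rw [hWfun]
    exact Measurable.ite (hRtM (measurableSet_singleton 1)) measurable_const measurable_const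
  have hWbdd : ∀ ω, ‖W ω‖ ≤ 1 := by
    intro ω
    rw [hW ω, Real.norm_eq_abs]
    split_ifs
    · rw [abs_of_nonneg hρ₁0]; linarith
    · rw [abs_of_nonpos (by linarith)]; linarith
  have hWGint : Integrable (fun ω => W ω * G ω) μ :=
    hGint.bdd_mul (c := 1) hWM.aestronglyMeasurable (Filter.Eventually.of_forall hWbdd)
  -- decomposition of integrals
  have hdecomp : ∀ f : Ω → ℝ, Integrable f μ →
      ∫ ω, f ω ∂μ = (μ (Rs ⁻¹' {0})).toReal * ∫ ω, f ω ∂(μ[|Rs ⁻¹' {0}])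
        + (μ (Rs ⁻¹' {1})).toReal * ∫ ω, f ω ∂(μ[|Rs ⁻¹' {1}]) := by
    intro f hf
    rw [← setIntegral_eq_cond_aux hpos0 f, ← setIntegral_eq_cond_aux hpos1 f, hcompl,
      integral_add_compl hms0 hf]
  -- conditional means of W
  have hWint : ∀ (ν : Measure Ω), IsProbabilityMeasure ν →
      ∫ ω, W ω ∂ν = ρ₁ - (ν (Rt ⁻¹' {0})).toReal := by
    intro ν hν
    have hWeq : ∀ ω, W ω = ρ₁ - (Rt ⁻¹' {0}).indicator (1 : Ω → ℝ) ω := by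
      intro ω
      rw [hW ω]
      rcases hRt01 ω with h | h
      · simp [Set.indicator_apply, Set.mem_preimage, h]
      · simp [Set.indicator_apply, Set.mem_preimage, h]
    calc ∫ ω, W ω ∂ν = ∫ ω, (ρ₁ - (Rt ⁻¹' {0}).indicator (1 : Ω → ℝ) ω) ∂ν := by
          exact integral_congr_ae (Filter.Eventually.of_forall hWeq)
      _ = ρ₁ - (ν (Rt ⁻¹' {0})).toReal := by
          have h1 : Integrable ((Rt ⁻¹' {0}).indicator (1 : Ω → ℝ)) ν :=
            (integrable_const 1).indicator hmt0
          rw [integral_sub (integrable_const _) h1, integral_const, integral_indicator_one hmt0]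
          simp [measureReal_def]
  have hW0 : ∫ ω, W ω ∂(μ[|Rs ⁻¹' {0}]) = ρ₀ + ρ₁ - 1 := by
    rw [hWint _ hP0, hcomplT, prob_compl_eq_one_sub hmt1, hFP,
      ENNReal.toReal_sub_of_le (ENNReal.ofReal_le_one.mpr (by linarith)) ENNReal.one_ne_top,
      ENNReal.toReal_one, ENNReal.toReal_ofReal hρ₀0]
    ring
  have hW1 : ∫ ω, W ω ∂(μ[|Rs ⁻¹' {1}]) = 0 := by
    rw [hWint _ hP1, hFN, ENNReal.toReal_ofReal hρ₁0, sub_self]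
  -- ∫ Rs·G = p · E[G | Rs = 1]
  have hRsG : ∫ ω, Rs ω * G ω ∂μ
      = (μ (Rs ⁻¹' {1})).toReal * ∫ ω, G ω ∂(μ[|Rs ⁻¹' {1}]) := by
    have hRsGeq : ∀ ω, Rs ω * G ω = (Rs ⁻¹' {1}).indicator G ω := by
      intro ω
      rcases hRs01 ω with h | h <;> simp [Set.indicator_apply, Set.mem_preimage, h]
    rw [integral_congr_ae (Filter.Eventually.of_forall hRsGeq), integral_indicator hms1,
      setIntegral_eq_cond_aux hpos1 G]
  -- mean-zero condition
  have hG0 : (μ (Rs ⁻¹' {0})).toReal * ∫ ω, G ω ∂(μ[|Rs ⁻¹' {0}])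
      + (μ (Rs ⁻¹' {1})).toReal * ∫ ω, G ω ∂(μ[|Rs ⁻¹' {1}]) = 0 := by
    rw [← hdecomp G hGint]; exact hGmean
  -- key identity
  have key : ∫ ω, W ω * G ω ∂μ = (1 - ρ₀ - ρ₁) * ∫ ω, Rs ω * G ω ∂μ := by
    rw [hdecomp _ hWGint, hCondIndep 0 (by simp), hCondIndep 1 (by simp), hW0, hW1, hRsG]
    set q := (μ (Rs ⁻¹' {0})).toReal
    set p := (μ (Rs ⁻¹' {1})).toReal
    set a0 := ∫ ω, G ω ∂(μ[|Rs ⁻¹' {0}])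
    set a1 := ∫ ω, G ω ∂(μ[|Rs ⁻¹' {1}])
    have hq : q * a0 = -(p * a1) := by linarith
    calc q * ((ρ₀ + ρ₁ - 1) * a0) + p * (0 * a1) = (ρ₀ + ρ₁ - 1) * (q * a0) := by ring
      _ = (1 - ρ₀ - ρ₁) * (p * a1) := by rw [hq]; ring
  refine ⟨key, fun hpos => ?_⟩
  rw [key]
  exact mul_pos (by linarith) hpos
end
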